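/- arXiv:2502.12033 — 2 statements merged into one kernel-verified Lean document; each statement's English description precedes it below -/
import Mathlib

section
/- For matrices A, B ∈ R^{m×n}, if the column spaces of A and B intersect trivially and the row spaces of A and B intersect trivially, then rank(A + B) = rank(A) + rank(B). -/
open Matrix

/-!
When the column spaces of `A` and `B` meet trivially, `(A + B) v = 0` forces `A v = B v = 0`, so
`A + B` has the same kernel, hence the same rank, as the stacked matrix `[A; B]`. Transposing,
`[A; B]` has the rank of `[Aᵀ | Bᵀ]`, whose column space is the sum of the row spaces of `A` and
`B`; as these meet trivially, its dimension is `rank A + rank B`.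
-/

theorem LinearMap.ker_add_eq_inf_of_disjoint_range {R M N : Type*} [Ring R] [AddCommGroup M]
    [Module R M] [AddCommGroup N] [Module R N] {f g : M →ₗ[R] N}
    (h : Disjoint (LinearMap.range f) (LinearMap.range g)) :
    LinearMap.ker (f + g) = LinearMap.ker f ⊓ LinearMap.ker g := by
  refine le_antisymm (fun v hv => ?_) (fun v ⟨hf, hg⟩ => by simp_all)
  have hfg : f v + g v = 0 := hv
  have hfv : f v = 0 := by
    refine Submodule.disjoint_def.mp h _ ⟨v, rfl⟩ ⟨-v, ?_⟩
    rw [map_neg, eq_neg_of_add_eq_zero_left hfg]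
  exact ⟨hfv, by rwa [hfv, zero_add] at hfg⟩

namespace Matrix

variable {K m m₁ m₂ n n₁ n₂ : Type*} [Field K]

theorem ker_mulVecLin_fromRows [Fintype n] (A₁ : Matrix m₁ n K) (A₂ : Matrix m₂ n K) :
    LinearMap.ker (fromRows A₁ A₂).mulVecLin
      = LinearMap.ker A₁.mulVecLin ⊓ LinearMap.ker A₂.mulVecLin := by
  ext v
  simp [funext_iff, Sum.forall]

theorem range_mulVecLin_fromCols [Fintype n₁] [Fintype n₂] (A₁ : Matrix m n₁ K)
    (A₂ : Matrix m n₂ K) :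
    LinearMap.range (fromCols A₁ A₂).mulVecLin
      = LinearMap.range A₁.mulVecLin ⊔ LinearMap.range A₂.mulVecLin := by
  refine le_antisymm ?_ (sup_le ?_ ?_)
  · rintro _ ⟨v, rfl⟩
    rw [mulVecLin_apply, fromCols_mulVec]
    exact Submodule.add_mem_sup ⟨_, rfl⟩ ⟨_, rfl⟩
  · rintro _ ⟨v, rfl⟩
    exact ⟨Sum.elim v 0, by simp⟩
  · rintro _ ⟨v, rfl⟩
    exact ⟨Sum.elim 0 v, by simp⟩

theorem rank_add_eq_rank_fromRows_of_disjoint [Fintype n] (A B : Matrix m n K)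
    (h : Disjoint (LinearMap.range A.mulVecLin) (LinearMap.range B.mulVecLin)) :
    (A + B).rank = (fromRows A B).rank := by
  have hker : LinearMap.ker (A + B).mulVecLin = LinearMap.ker (fromRows A B).mulVecLin := by
    rw [mulVecLin_add, LinearMap.ker_add_eq_inf_of_disjoint_range h, ker_mulVecLin_fromRows]
  have hAB := LinearMap.finrank_range_add_finrank_ker (A + B).mulVecLin
  have hC := LinearMap.finrank_range_add_finrank_ker (fromRows A B).mulVecLin
  rw [hker] at hAB
  rw [rank, rank]
  omega

theorem rank_fromCols_of_disjoint [Fintype m] [Fintype n₁] [Fintype n₂] (A₁ : Matrix m n₁ K)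
    (A₂ : Matrix m n₂ K)
    (h : Disjoint (LinearMap.range A₁.mulVecLin) (LinearMap.range A₂.mulVecLin)) :
    (fromCols A₁ A₂).rank = A₁.rank + A₂.rank := by
  have := Submodule.finrank_sup_add_finrank_inf_eq (LinearMap.range A₁.mulVecLin)
    (LinearMap.range A₂.mulVecLin)
  rw [h.eq_bot, finrank_bot, add_zero] at this
  rw [rank, range_mulVecLin_fromCols, this, rank, rank]

end Matrix

/-- If the column spaces and the row spaces of A and B intersect trivially,
then rank(A + B) = rank(A) + rank(B). -/
theorem rank_add_eq_of_trivial_inter (m n : ℕ) (A B : Matrix (Fin m) (Fin n) ℝ)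
    (hcol : LinearMap.range A.mulVecLin ⊓ LinearMap.range B.mulVecLin = ⊥)
    (hrow : LinearMap.range Aᵀ.mulVecLin ⊓ LinearMap.range Bᵀ.mulVecLin = ⊥) :
    (A + B).rank = A.rank + B.rank := by
  calc (A + B).rank = (fromRows A B).rank :=
        rank_add_eq_rank_fromRows_of_disjoint A B (disjoint_iff.mpr hcol)
    _ = (fromCols Aᵀ Bᵀ).rank := by rw [← rank_transpose, transpose_fromRows]
    _ = Aᵀ.rank + Bᵀ.rank := rank_fromCols_of_disjoint Aᵀ Bᵀ (disjoint_iff.mpr hrow)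
    _ = A.rank + B.rank := by rw [rank_transpose, rank_transpose]
end

section
/- Layer normalization preserves matrix rank: for A ∈ R^{m×n} with every row having nonzero standard deviation, rank(D⁻¹(A − 1·E(A)ᵀ)) ∈ {rank(A) − 1, rank(A)}, where E(A) is the vector of row means and D is the diagonal matrix of row standard deviations; in particular the rank changes by at most 1 and rank(D⁻¹(A − 1·E(A)ᵀ)) = rank(A − 1·E(A)ᵀ). -/
/-!
Subtracting the row means is right multiplication by the centering matrix `1 - (1/n) J`, so it
cannot raise the rank; it is also a rank-one perturbation, so it lowers the rank by at most one.
Scaling the rows by the nonzero `1 / σ i` is left multiplication by an invertible diagonal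
matrix, which preserves the rank.
-/

namespace Matrix

variable {K m n : Type*} [Field K] [Fintype n]

theorem rank_add_le (A B : Matrix m n K) : (A + B).rank ≤ A.rank + B.rank := by
  rw [rank, rank, rank, mulVecLin_add]
  refine (Submodule.finrank_mono ?_).trans (Submodule.finrank_add_le_finrank_add_finrank _ _)
  rintro x ⟨y, rfl⟩
  exact Submodule.add_mem_sup ⟨y, rfl⟩ ⟨y, rfl⟩

theorem rank_le_rank_sub_vecMulVec_add_one (A : Matrix m n K) (w : m → K) (v : n → K) :
    A.rank ≤ (A - vecMulVec w v).rank + 1 :=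
  calc A.rank = (A - vecMulVec w v + vecMulVec w v).rank := by rw [sub_add_cancel]
    _ ≤ (A - vecMulVec w v).rank + (vecMulVec w v).rank := rank_add_le _ _
    _ ≤ (A - vecMulVec w v).rank + 1 := by gcongr; exact rank_vecMulVec_le w v

theorem sub_vecMulVec_rowSum_div_eq_mul [DecidableEq n] (A : Matrix m n K) (c : K) :
    A - vecMulVec (fun i => (∑ j, A i j) / c) (fun _ => 1) =
      A * ((1 : Matrix n n K) - of fun _ _ => c⁻¹) := by
  rw [Matrix.mul_sub, Matrix.mul_one]
  ext i j
  simp [mul_apply, vecMulVec_apply, div_eq_mul_inv, Finset.sum_mul]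

theorem rank_sub_vecMulVec_rowSum_div_le (A : Matrix m n K) (c : K) :
    (A - vecMulVec (fun i => (∑ j, A i j) / c) (fun _ => 1)).rank ≤ A.rank := by
  classical
  rw [sub_vecMulVec_rowSum_div_eq_mul]
  exact rank_mul_le_left _ _

theorem rank_diagonal_mul_of_ne_zero [Fintype m] [DecidableEq m] {d : m → K}
    (hd : ∀ i, d i ≠ 0) (B : Matrix m n K) : (diagonal d * B).rank = B.rank := by
  refine rank_mul_eq_right_of_isUnit_det _ _ ?_
  rw [det_diagonal]
  exact isUnit_iff_ne_zero.mpr (Finset.prod_ne_zero_iff.mpr fun i _ => hd i)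

end Matrix

theorem layerNorm_rank_general (m n : ℕ) (A : Matrix (Fin m) (Fin n) ℝ)
    (σ : Fin m → ℝ)
    (hσ : ∀ i, σ i ≠ 0) :
    (((Matrix.diagonal fun i => (σ i)⁻¹) *
        (A - Matrix.vecMulVec (fun i => (∑ j, A i j) / n) (fun _ => (1 : ℝ)))).rank
        = A.rank - 1 ∨
      ((Matrix.diagonal fun i => (σ i)⁻¹) *
        (A - Matrix.vecMulVec (fun i => (∑ j, A i j) / n) (fun _ => (1 : ℝ)))).rank
        = A.rank) ∧
    ((Matrix.diagonal fun i => (σ i)⁻¹) *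
        (A - Matrix.vecMulVec (fun i => (∑ j, A i j) / n) (fun _ => (1 : ℝ)))).rank
      = (A - Matrix.vecMulVec (fun i => (∑ j, A i j) / n) (fun _ => (1 : ℝ))).rank := by
  have hscale := Matrix.rank_diagonal_mul_of_ne_zero (fun i => inv_ne_zero (hσ i))
    (A - Matrix.vecMulVec (fun i => (∑ j, A i j) / n) (fun _ => (1 : ℝ)))
  have hle := Matrix.rank_sub_vecMulVec_rowSum_div_le A (n : ℝ)
  have hge := Matrix.rank_le_rank_sub_vecMulVec_add_one A
    (fun i => (∑ j, A i j) / n) (fun _ => (1 : ℝ))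
  exact ⟨by omega, hscale⟩

/-- Layer normalization essentially preserves the rank: it changes the rank by at
most one (the rank of the normalized matrix is rank(A) − 1 or rank(A)), and the
diagonal rescaling by the row standard deviations does not change the rank of the
mean-centered matrix. -/
theorem layerNorm_rank (m n : ℕ) (hn : 0 < n) (A : Matrix (Fin m) (Fin n) ℝ)
    (σ : Fin m → ℝ)
    (hσdef : ∀ i, σ i = Real.sqrt ((∑ j, (A i j - (∑ l, A i l) / n) ^ 2) / n))
    (hσ : ∀ i, σ i ≠ 0) :
    (((Matrix.diagonal fun i => (σ i)⁻¹) *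
        (A - Matrix.vecMulVec (fun i => (∑ j, A i j) / n) (fun _ => (1 : ℝ)))).rank
        = A.rank - 1 ∨
      ((Matrix.diagonal fun i => (σ i)⁻¹) *
        (A - Matrix.vecMulVec (fun i => (∑ j, A i j) / n) (fun _ => (1 : ℝ)))).rank
        = A.rank) ∧
    ((Matrix.diagonal fun i => (σ i)⁻¹) *
        (A - Matrix.vecMulVec (fun i => (∑ j, A i j) / n) (fun _ => (1 : ℝ)))).rank
      = (A - Matrix.vecMulVec (fun i => (∑ j, A i j) / n) (fun _ => (1 : ℝ))).rank :=
  layerNorm_rank_general m n A σ hσ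
end
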